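/- arXiv:math/0212316 — 2 statements merged into one kernel-verified Lean document; each statement's English description precedes it below -/
import Mathlib

section
/- Let $f : A \to B$ be a faithfully flat ring homomorphism and $M$ an $A$-module. Then the sequence $0 \to M \to M \otimes_A B \to M \otimes_A B \otimes_A B$ is exact, where the first map is $m \mapsto m \otimes 1$ and the second sends $m \otimes b \mapsto m \otimes b \otimes 1 - m \otimes 1 \otimes b$. -/
open scoped TensorProduct

open TensorProduct LinearMap

/-- Auxiliary trilinear map `n ↦ b ↦ b' ↦ n ⊗ (b * b')`. -/
noncomputable def descentContractAux (A B N : Type) [CommRing A] [CommRing B] [Algebra A B]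
    [AddCommGroup N] [Module A N] : N →ₗ[A] B →ₗ[A] B →ₗ[A] N ⊗[A] B where
  toFun n := (LinearMap.mul A B).compr₂ (TensorProduct.mk A N B n)
  map_add' x y := by ext b b'; simp [TensorProduct.add_tmul]
  map_smul' c x := by ext b b'; simp [TensorProduct.smul_tmul']

/-- The contraction `(N ⊗ B) ⊗ B → N ⊗ B`, `n ⊗ b ⊗ b' ↦ n ⊗ (b * b')`. -/
noncomputable def descentContract (A B N : Type) [CommRing A] [CommRing B] [Algebra A B]
    [AddCommGroup N] [Module A N] : (N ⊗[A] B) ⊗[A] B →ₗ[A] N ⊗[A] B :=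
  TensorProduct.lift (TensorProduct.lift (descentContractAux A B N))

@[simp] lemma descentContract_tmul (A B N : Type) [CommRing A] [CommRing B] [Algebra A B]
    [AddCommGroup N] [Module A N] (n : N) (b b' : B) :
    descentContract A B N ((n ⊗ₜ[A] b) ⊗ₜ[A] b') = n ⊗ₜ[A] (b * b') := rfl

/-- **Faithfully flat descent exactness for modules (Amitsur complex in degree ≤ 1).**
Let `f : A → B` be faithfully flat and `M` an `A`-module.  Then
`0 → M → M ⊗_A B → M ⊗_A B ⊗_A B` is exact, where the first map is `ι : m ↦ m ⊗ 1` and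
the second sends `m ⊗ b ↦ m ⊗ b ⊗ 1 - m ⊗ 1 ⊗ b`: that is, `ι` is injective, and an
element `x ∈ M ⊗_A B` satisfies `x ⊗ 1 = (ι ⊗ id_B)(x)` (the two images in
`M ⊗_A B ⊗_A B` agree) if and only if `x` is in the image of `ι`. -/
theorem faithfully_flat_module_descent_exactness
    (A B : Type) [CommRing A] [CommRing B] [Algebra A B] [Module.FaithfullyFlat A B]
    (M : Type) [AddCommGroup M] [Module A M] :
    Function.Injective ((TensorProduct.mk A M B).flip 1) ∧
    ∀ x : M ⊗[A] B,
      x ⊗ₜ[A] (1 : B) = LinearMap.rTensor B ((TensorProduct.mk A M B).flip 1) x ↔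
        x ∈ LinearMap.range ((TensorProduct.mk A M B).flip 1) := by
  set ι : M →ₗ[A] M ⊗[A] B := (TensorProduct.mk A M B).flip 1 with hι
  set j : M ⊗[A] B →ₗ[A] (M ⊗[A] B) ⊗[A] B := (TensorProduct.mk A (M ⊗[A] B) B).flip 1 with hj
  set d : M ⊗[A] B →ₗ[A] (M ⊗[A] B) ⊗[A] B := j - ι.rTensor B with hd
  -- retraction of the base-changed `ι`
  have retr : ∀ y : M ⊗[A] B, descentContract A B M (ι.rTensor B y) = y := by
    intro y
    induction y using TensorProduct.induction_on with
    | zero => simp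
    | tmul m b => simp [hι]
    | add x y hx hy => simp [map_add, hx, hy]
  have inj_rT : Function.Injective (ι.rTensor B) := Function.LeftInverse.injective retr
  -- the homotopy identity
  have homotopy : ∀ y : (M ⊗[A] B) ⊗[A] B,
      ι.rTensor B (descentContract A B M y)
        + descentContract A B (M ⊗[A] B) ((d.rTensor B) y) = y := by
    intro y
    induction y using TensorProduct.induction_on with
    | zero => simp
    | tmul x b =>
      induction x using TensorProduct.induction_on with
      | zero => simp
      | tmul m b' =>
        simp only [descentContract_tmul, rTensor_tmul, hd, hj, hι, LinearMap.sub_apply,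
          TensorProduct.sub_tmul, map_sub, LinearMap.flip_apply, TensorProduct.mk_apply,
          descentContract_tmul, one_mul, mul_one]
        abel
      | add x₁ x₂ h₁ h₂ =>
        rw [TensorProduct.add_tmul]
        simp only [map_add] at h₁ h₂ ⊢
        rw [add_add_add_comm, h₁, h₂]
    | add x y hx hy => simp only [map_add]; rw [add_add_add_comm, hx, hy]
  -- complex property
  have comp_zero : d ∘ₗ ι = 0 := by
    ext m
    simp [hd, hj, hι]
  -- exactness of the base-changed sequence
  have exact_rT : Function.Exact (ι.rTensor B) (d.rTensor B) := by
    intro y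
    constructor
    · intro h0
      refine ⟨descentContract A B M y, ?_⟩
      have := homotopy y
      rw [h0, map_zero, add_zero] at this
      exact this
    · rintro ⟨x, rfl⟩
      rw [← LinearMap.comp_apply, ← LinearMap.rTensor_comp, comp_zero, LinearMap.rTensor_zero,
        LinearMap.zero_apply]
  have exact_desc : Function.Exact ι d :=
    Module.FaithfullyFlat.rTensor_reflects_exact A B ι d exact_rT
  -- injectivity, by reflecting exactness of `0 → M → M ⊗ B`
  have exact0_rT : Function.Exact ((0 : PUnit.{1} →ₗ[A] M).rTensor B) (ι.rTensor B) := by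
    rw [LinearMap.rTensor_zero]
    intro y
    constructor
    · intro h0
      refine ⟨0, ?_⟩
      have : ι.rTensor B y = ι.rTensor B 0 := by simpa using h0
      simpa using (inj_rT this).symm
    · rintro ⟨x, rfl⟩
      simp
  have exact0 : Function.Exact (0 : PUnit.{1} →ₗ[A] M) ι :=
    Module.FaithfullyFlat.rTensor_reflects_exact A B _ _ exact0_rT
  constructor
  · intro m m' h
    have : ι (m - m') = 0 := by rw [map_sub, h, sub_self]
    obtain ⟨p, hp⟩ := (exact0 (m - m')).mp this
    have : m - m' = 0 := by rw [← hp]; simp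
    exact sub_eq_zero.mp this
  · intro x
    have hx := exact_desc x
    rw [hd] at hx
    simp only [LinearMap.sub_apply, sub_eq_zero] at hx
    rw [show x ⊗ₜ[A] (1 : B) = j x from rfl]
    rw [hx]
    exact ⟨fun ⟨m, hm⟩ => ⟨m, hm⟩, fun ⟨m, hm⟩ => ⟨m, hm⟩⟩
end

section
/- Let $f : A \to B$ be a faithfully flat ring homomorphism, $M, N$ be $A$-modules, and $h' : M \otimes_A B \to N \otimes_A B$ a $B$-module homomorphism such that the two induced maps $M \otimes_A B \otimes_A B \to N \otimes_A B \otimes_A B$ (extending $h'$ along the two inclusions $B \to B \otimes_A B$) coincide. Then there exists a unique $A$-module homomorphism $h : M \to N$ with $h' = h \otimes_A \mathrm{id}_B$. -/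
open scoped TensorProduct

/-- The `A`-linear automorphism of `B ⊗_A (B ⊗_A M)` swapping the two `B`-factors,
`b ⊗ b' ⊗ m ↦ b' ⊗ b ⊗ m`.  Conjugating by it interchanges the two natural ways of
extending a map on `M ⊗_A B` along the two inclusions `B → B ⊗_A B`. -/
noncomputable def swapBB (A B M : Type) [CommRing A] [CommRing B] [Algebra A B]
    [AddCommGroup M] [Module A M] :
    B ⊗[A] (B ⊗[A] M) ≃ₗ[A] B ⊗[A] (B ⊗[A] M) :=
  (TensorProduct.assoc A B B M).symm.trans
    ((TensorProduct.congr (TensorProduct.comm A B B) (LinearEquiv.refl A M)).trans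
      (TensorProduct.assoc A B B M))

section Aux

variable (A B : Type) [CommRing A] [CommRing B] [Algebra A B]
variable (X : Type) [AddCommGroup X] [Module A X]

@[simp] lemma swapBB_tmul (b c : B) (x : X) :
    swapBB A B X (b ⊗ₜ (c ⊗ₜ x)) = c ⊗ₜ (b ⊗ₜ x) := rfl

/-- `x ↦ 1 ⊗ x`. -/
noncomputable def iotaX : X →ₗ[A] B ⊗[A] X := TensorProduct.mk A B X 1

@[simp] lemma iotaX_apply (x : X) : iotaX A B X x = (1 : B) ⊗ₜ x := rfl

/-- The Amitsur differential `y ↦ 1 ⊗ y - swap (1 ⊗ y)`. -/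
noncomputable def deltaX : B ⊗[A] X →ₗ[A] B ⊗[A] (B ⊗[A] X) :=
  iotaX A B (B ⊗[A] X) - (swapBB A B X).toLinearMap ∘ₗ iotaX A B (B ⊗[A] X)

lemma deltaX_apply (y : B ⊗[A] X) :
    deltaX A B X y = (1 : B) ⊗ₜ y - swapBB A B X ((1 : B) ⊗ₜ y) := rfl

/-- Multiplication of the first two factors. -/
noncomputable def muX : B ⊗[A] (B ⊗[A] X) →ₗ[A] B ⊗[A] X :=
  (LinearMap.rTensor X (LinearMap.mul' A B)) ∘ₗ (TensorProduct.assoc A B B X).symm.toLinearMap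

@[simp] lemma muX_tmul (b c : B) (x : X) : muX A B X (b ⊗ₜ (c ⊗ₜ x)) = (b * c) ⊗ₜ x := by
  simp [muX]

lemma mu_comp_lTensor_iota :
    muX A B X ∘ₗ LinearMap.lTensor B (iotaX A B X) = LinearMap.id := by
  apply TensorProduct.ext'
  intro b x
  simp

lemma delta_comp_iota : deltaX A B X ∘ₗ iotaX A B X = 0 := by
  apply LinearMap.ext
  intro x
  simp [deltaX_apply]

lemma homotopy :
    muX A B (B ⊗[A] X) ∘ₗ LinearMap.lTensor B (deltaX A B X) =
      LinearMap.id - LinearMap.lTensor B (iotaX A B X) ∘ₗ muX A B X := by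
  apply TensorProduct.ext'
  intro b z
  induction z using TensorProduct.induction_on with
  | zero => simp
  | tmul c x =>
      rw [LinearMap.comp_apply, LinearMap.lTensor_tmul, deltaX_apply, swapBB_tmul,
        TensorProduct.tmul_sub, map_sub, muX_tmul, muX_tmul,
        LinearMap.sub_apply, LinearMap.id_apply, LinearMap.comp_apply, muX_tmul,
        LinearMap.lTensor_tmul, iotaX_apply, mul_one]
  | add z₁ z₂ h₁ h₂ =>
      simp only [TensorProduct.tmul_add, map_add] at h₁ h₂ ⊢
      rw [h₁, h₂]

variable [Module.FaithfullyFlat A B]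

lemma iota_injective : Function.Injective (iotaX A B X) := by
  have hinj : Function.Injective (LinearMap.lTensor B (iotaX A B X)) := by
    have : Function.LeftInverse (muX A B X) (LinearMap.lTensor B (iotaX A B X)) := by
      intro y
      have := congrArg (fun f => f y) (mu_comp_lTensor_iota A B X)
      simpa using this
    exact this.injective
  have hex : Function.Exact ((0 : PUnit.{1} →ₗ[A] X).lTensor B) ((iotaX A B X).lTensor B) := by
    rw [LinearMap.exact_iff]
    rw [LinearMap.lTensor_zero, LinearMap.range_zero, LinearMap.ker_eq_bot]
    exact hinj
  have := Module.FaithfullyFlat.lTensor_reflects_exact A B _ _ hex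
  intro x y hxy
  have hx : iotaX A B X (x - y) = 0 := by
    simp only [map_sub, hxy, sub_self]
  have := (this (x - y)).mp hx
  obtain ⟨p, hp⟩ := this
  simp only [LinearMap.zero_apply] at hp
  exact sub_eq_zero.mp hp.symm


lemma exact_iota_delta : Function.Exact (iotaX A B X) (deltaX A B X) := by
  apply Module.FaithfullyFlat.lTensor_reflects_exact A B
  intro z
  constructor
  · intro hz
    refine ⟨muX A B X z, ?_⟩
    have hzz := congrArg (fun f => f z) (homotopy A B X)
    simp only [LinearMap.comp_apply, LinearMap.sub_apply, LinearMap.id_apply] at hzz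
    rw [hz, map_zero] at hzz
    have : z - LinearMap.lTensor B (iotaX A B X) (muX A B X z) = 0 := hzz.symm
    exact (sub_eq_zero.mp this).symm
  · rintro ⟨w, rfl⟩
    rw [← LinearMap.comp_apply, ← LinearMap.lTensor_comp, delta_comp_iota,
      LinearMap.lTensor_zero, LinearMap.zero_apply]

end Aux

/-- **Faithfully flat descent of module homomorphisms.**
Let `f : A → B` be faithfully flat, `M, N` `A`-modules, and
`h' : M ⊗_A B → N ⊗_A B` (written here as `B ⊗_A M → B ⊗_A N`) a `B`-module map such
that the two induced maps `M ⊗_A B ⊗_A B → N ⊗_A B ⊗_A B`, obtained by extending `h'`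
along the two inclusions `B → B ⊗_A B` (the second being the swap-conjugate of the
first), coincide.  Then there is a unique `A`-module map `h : M → N` with
`h' = h ⊗_A id_B` (i.e. `h'` is the base change of `h`). -/
theorem faithfully_flat_descent_of_morphisms
    (A B : Type) [CommRing A] [CommRing B] [Algebra A B] [Module.FaithfullyFlat A B]
    (M N : Type) [AddCommGroup M] [Module A M] [AddCommGroup N] [Module A N]
    (h' : B ⊗[A] M →ₗ[B] B ⊗[A] N)
    (hglue : (swapBB A B N).toLinearMap ∘ₗ
        (LinearMap.lTensor B (h'.restrictScalars A)) ∘ₗ (swapBB A B M).toLinearMap =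
      LinearMap.lTensor B (h'.restrictScalars A)) :
    ∃! h : M →ₗ[A] N, LinearMap.baseChange B h = h' := by
  classical
  -- h'(1 ⊗ m) is in the kernel of delta
  have hker : ∀ m : M, deltaX A B N (h' ((1 : B) ⊗ₜ m)) = 0 := by
    intro m
    have := congrArg (fun f => f ((1 : B) ⊗ₜ ((1 : B) ⊗ₜ m))) hglue
    simp only [LinearMap.comp_apply, LinearEquiv.coe_coe, swapBB_tmul,
      LinearMap.lTensor_tmul, LinearMap.coe_restrictScalars] at this
    rw [deltaX_apply, this, sub_self]
  have hex := exact_iota_delta A B N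
  have hinjN := iota_injective A B N
  -- the underlying function of h
  have hval : ∀ m : M, ∃ n : N, iotaX A B N n = h' ((1 : B) ⊗ₜ m) := fun m =>
    (hex _).mp (hker m)
  choose hf hhf using hval
  have hadd : ∀ m₁ m₂, hf (m₁ + m₂) = hf m₁ + hf m₂ := by
    intro m₁ m₂
    apply hinjN
    rw [hhf, map_add]
    rw [hhf, hhf]
    rw [show ((1:B) ⊗ₜ (m₁ + m₂) : B ⊗[A] M) = (1:B) ⊗ₜ m₁ + (1:B) ⊗ₜ m₂ from
      TensorProduct.tmul_add _ _ _, map_add]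
  have hsmul : ∀ (a : A) m, hf (a • m) = a • hf m := by
    intro a m
    apply hinjN
    rw [hhf]
    rw [show ((1:B) ⊗ₜ (a • m) : B ⊗[A] M) = a • ((1:B) ⊗ₜ m) from
      (TensorProduct.tmul_smul a (1:B) m), LinearMap.map_smul_of_tower, ← hhf, map_smul]
  let h : M →ₗ[A] N := { toFun := hf, map_add' := hadd, map_smul' := hsmul }
  have hi : ∀ m : M, ((1 : B) ⊗ₜ h m : B ⊗[A] N) = h' ((1 : B) ⊗ₜ m) := fun m => hhf m
  refine ⟨h, ?_, ?_⟩
  · -- baseChange h = h'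
    apply LinearMap.restrictScalars_injective A
    apply TensorProduct.ext'
    intro b m
    have h1 : (b ⊗ₜ m : B ⊗[A] M) = b • ((1 : B) ⊗ₜ m) := by
      rw [TensorProduct.smul_tmul', smul_eq_mul, mul_one]
    calc (LinearMap.baseChange B h) (b ⊗ₜ m) = b ⊗ₜ h m := by simp
      _ = b • ((1 : B) ⊗ₜ h m) := by rw [TensorProduct.smul_tmul', smul_eq_mul, mul_one]
      _ = b • h' ((1 : B) ⊗ₜ m) := by rw [hi]
      _ = h' (b ⊗ₜ m) := by rw [h1, map_smul]
  · -- uniqueness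
    intro g hg
    have : LinearMap.lTensor B (g - h) = 0 := by
      apply TensorProduct.ext'
      intro b m
      have h1 : LinearMap.baseChange B h = h' := by
        apply LinearMap.restrictScalars_injective A
        apply TensorProduct.ext'
        intro b m
        have h1 : (b ⊗ₜ m : B ⊗[A] M) = b • ((1 : B) ⊗ₜ m) := by
          rw [TensorProduct.smul_tmul', smul_eq_mul, mul_one]
        calc (LinearMap.baseChange B h) (b ⊗ₜ m) = b ⊗ₜ h m := by simp
          _ = b • ((1 : B) ⊗ₜ h m) := by rw [TensorProduct.smul_tmul', smul_eq_mul, mul_one]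
          _ = b • h' ((1 : B) ⊗ₜ m) := by rw [hi]
          _ = h' (b ⊗ₜ m) := by rw [h1, map_smul]
      have hgm : (b ⊗ₜ g m : B ⊗[A] N) = b ⊗ₜ h m := by
        have := congrArg (fun f => f (b ⊗ₜ m : B ⊗[A] M)) (hg.trans h1.symm)
        simpa using this
      simp [TensorProduct.tmul_sub, hgm]
    have := (Module.FaithfullyFlat.zero_iff_lTensor_zero A B (g - h)).mpr this
    exact sub_eq_zero.mp this
end
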